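/- For all integers m ≥ 2, r with m ≤ r ≤ 2m-1, and every integer τ satisfying τ ≤ (2m-1)(2m-r-1) + r² - (2r-2m+2)(2r-2m+1)/2, one has (3m² - 3m + 1) - τ ≥ 1. (This is the quantitative core of Theorem D, the non-freeness criterion: if a reduced plane curve C of even degree d = 2m ≥ 4 with only ADE singularities has Arnold exponent α_C ≥ 1/2 + 1/m, then mdr(C) ≥ m by the Dimca–Sernesi bound, the total Tjurina number satisfies the du Plessis–Wall bound τ(C) ≤ τ_max(2m, r), and hence the defect ν(C) = ⌈(3/4)(2m-1)²⌉ - τ(C) = 3m² - 3m + 1 - τ(C) is at least 1, so C is not free.) -/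

import Mathlib

theorem duPlessisWall_bound_even_degree (m r : ℚ) :
    (2 * m - 1) * (2 * m - r - 1) + r ^ 2 - (2 * r - 2 * m + 2) * (2 * r - 2 * m + 1) / 2
      = 3 * m ^ 2 - 3 * m - (r - m) * (r - m + 2) := by
  ring

theorem stmt_9_general (m r τ : ℤ) (hr : m ≤ r)
    (hτ : (τ : ℚ) ≤ (2 * (m : ℚ) - 1) * (2 * (m : ℚ) - (r : ℚ) - 1) + (r : ℚ) ^ 2
        - (2 * (r : ℚ) - 2 * (m : ℚ) + 2) * (2 * (r : ℚ) - 2 * (m : ℚ) + 1) / 2) :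
    (3 * (m : ℚ) ^ 2 - 3 * (m : ℚ) + 1) - (τ : ℚ) ≥ 1 := by
  rw [duPlessisWall_bound_even_degree] at hτ
  have hs : (0 : ℚ) ≤ r - m := sub_nonneg.2 (by exact_mod_cast hr)
  have hcorr : (0 : ℚ) ≤ (r - m) * (r - m + 2) := mul_nonneg hs (by linarith)
  linarith

/-- Quantitative core of Theorem D (non-freeness criterion): for integers
`m ≥ 2`, `m ≤ r ≤ 2m-1`, and any integer `τ` with
`τ ≤ (2m-1)(2m-r-1) + r² - (2r-2m+2)(2r-2m+1)/2`, one has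
`(3m² - 3m + 1) - τ ≥ 1`. -/
theorem stmt_9 (m r τ : ℤ) (hm : 2 ≤ m) (hr : m ≤ r) (hr' : r ≤ 2 * m - 1)
    (hτ : (τ : ℚ) ≤ (2 * (m : ℚ) - 1) * (2 * (m : ℚ) - (r : ℚ) - 1) + (r : ℚ) ^ 2
        - (2 * (r : ℚ) - 2 * (m : ℚ) + 2) * (2 * (r : ℚ) - 2 * (m : ℚ) + 1) / 2) :
    (3 * (m : ℚ) ^ 2 - 3 * (m : ℚ) + 1) - (τ : ℚ) ≥ 1 :=
  stmt_9_general m r τ hr hτ
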